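/- With notation as above and q = q₁q₂ a product of distinct primes, if t satisfies gcd(t, q) = q₁ (i.e., t = t'q₁ with gcd(t', q₂) = 1), then det(zI - g^t)·det(zI - ḡ^t) = Ψ_{q₂}(z)^{q₁ - 1}. -/

import Mathlib

open Finset

/-- The 2×2 rotation matrix by angle `2πν`, viewed over `ℂ`. -/
noncomputable def Rot (ν : ℝ) : Matrix (Fin 2) (Fin 2) ℂ :=
  !![(Real.cos (2 * Real.pi * ν) : ℂ), (Real.sin (2 * Real.pi * ν) : ℂ);
     (-Real.sin (2 * Real.pi * ν) : ℂ), (Real.cos (2 * Real.pi * ν) : ℂ)]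

/-- The block-diagonal matrix with rotation blocks `Rot (v j / q)`. -/
noncomputable def blockRot {n : ℕ} (q : ℕ) (v : Fin n → ℤ) :
    Matrix (Fin 2 × Fin n) (Fin 2 × Fin n) ℂ :=
  Matrix.blockDiagonal (fun j => Rot ((v j : ℝ) / q))

/-!
Write `e_N(x) = exp(2πi x / N)` for `x : ZMod N` (Mathlib's `ZMod.stdAddChar`). A rotation by
`2πν` has characteristic polynomial `(z - exp(2πiν))(z - exp(-2πiν))`, so the left-hand side is
`∏ (z - e_q(t x))` over the complete system `±R ∪ ±S`, i.e. over all units `x` of `ℤ/q`.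
Since `t = t' q₁`, `e_q(t x) = e_{q₂}(t' x)` only depends on `x mod q₂`. Reduction
`(ℤ/q)ˣ → (ℤ/q₂)ˣ` is onto with kernel of order `φ(q₁) = q₁ - 1`, and multiplication by `t'`
permutes `(ℤ/q₂)ˣ`, so the product is `(∏_{w ∈ (ℤ/q₂)ˣ} (z - e_{q₂}(w)))^(q₁ - 1)`; the values
`e_{q₂}(w)` for units `w` are exactly the primitive `q₂`-th roots of unity.
-/

open Complex
open scoped Real

theorem rot_add (a b : ℝ) : Rot (a + b) = Rot a * Rot b := by
  ext i j
  fin_cases i <;> fin_cases j <;>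
    simp [Rot, Matrix.mul_apply, mul_add, Real.cos_add, Real.sin_add] <;> ring

theorem rot_zero : Rot 0 = 1 := by
  ext i j
  fin_cases i <;> fin_cases j <;> simp [Rot]

theorem rot_pow (a : ℝ) (t : ℕ) : Rot a ^ t = Rot (t * a) := by
  induction t with
  | zero => simp [rot_zero]
  | succ m ih => rw [pow_succ, ih, ← rot_add]; push_cast; ring_nf

theorem det_smul_one_sub_rot (z : ℂ) (ν : ℝ) :
    (z • (1 : Matrix (Fin 2) (Fin 2) ℂ) - Rot ν).det
      = (z - exp (2 * π * ν * I)) * (z - exp (-(2 * π * ν) * I)) := by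
  rw [exp_mul_I, exp_mul_I, cos_neg, sin_neg]
  simp [Rot, Matrix.det_fin_two]
  linear_combination sin (2 * π * ν) ^ 2 * I_sq

theorem det_smul_one_sub_blockRot_pow (q : ℕ) [NeZero q] {m : ℕ} (v : Fin m → ℤ) (t : ℕ)
    (z : ℂ) :
    (z • (1 : Matrix (Fin 2 × Fin m) (Fin 2 × Fin m) ℂ) - blockRot q v ^ t).det
      = ∏ j, (z - ZMod.stdAddChar ((t : ZMod q) * (v j : ZMod q)))
          * (z - ZMod.stdAddChar ((t : ZMod q) * -(v j : ZMod q))) := by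
  rw [blockRot, ← Matrix.blockDiagonal_pow, ← Matrix.blockDiagonal_one,
    ← Matrix.blockDiagonal_smul, ← Matrix.blockDiagonal_sub, Matrix.det_blockDiagonal]
  refine prod_congr rfl fun j _ => ?_
  rw [Pi.sub_apply, Pi.smul_apply, Pi.one_apply, Pi.pow_apply, rot_pow, det_smul_one_sub_rot,
    ← Int.cast_natCast (R := ZMod q), ← Int.cast_neg, ← Int.cast_mul, ← Int.cast_mul,
    ZMod.stdAddChar_coe, ZMod.stdAddChar_coe]
  congr 3 <;> push_cast <;> ring

theorem Fintype.prod_comp_eq_prod_units {ι R M : Type*} [Fintype ι] [Monoid R] [Fintype Rˣ]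
    [CommMonoid M] {Φ : ι → R} (hinj : Function.Injective Φ)
    (hrange : Set.range Φ = {x | IsUnit x}) (f : R → M) :
    ∏ i, f (Φ i) = ∏ u : Rˣ, f u := by
  have hunit (i : ι) : IsUnit (Φ i) := by
    simpa [hrange] using Set.mem_range_self (f := Φ) i
  refine Fintype.prod_bijective (fun i => (hunit i).unit) ⟨fun i j hij => hinj ?_, fun u => ?_⟩
    _ _ fun i => by rw [IsUnit.unit_spec]
  · simpa using congrArg Units.val hij
  · obtain ⟨i, hi⟩ : (u : R) ∈ Set.range Φ := by simp [hrange]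
    exact ⟨i, Units.ext (by simpa using hi)⟩

theorem MonoidHom.prod_comp_eq_prod_pow_card_ker {G H M : Type*} [Group G] [Group H]
    [Fintype G] [Fintype H] [CommMonoid M] (ψ : G →* H) (hψ : Function.Surjective ψ)
    (f : H → M) : ∏ g, f (ψ g) = (∏ h, f h) ^ Nat.card ψ.ker := by
  classical
  have hfiber (h : H) : #{g | ψ g = h} = Nat.card ψ.ker := by
    rw [MonoidHom.card_fiber_eq_of_mem_range ψ (hψ h) ⟨1, map_one ψ⟩,
      ← Fintype.card_subtype, ← Nat.card_eq_fintype_card]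
    rfl
  rw [Finset.prod_comp, image_univ_of_surjective hψ, ← prod_pow]
  exact prod_congr rfl fun h _ => by rw [hfiber]

namespace ZMod

theorem card_ker_unitsMap_of_coprime {m n : ℕ} [NeZero m] [NeZero n] (hmn : m.Coprime n) :
    Nat.card (unitsMap (dvd_mul_left n m)).ker = m.totient := by
  have h := (unitsMap (dvd_mul_left n m)).ker.card_mul_index
  rw [Subgroup.index_ker, MonoidHom.range_eq_top.2 (unitsMap_surjective _),
    Subgroup.card_top, Nat.card_eq_fintype_card (α := (ZMod n)ˣ),
    Nat.card_eq_fintype_card (α := (ZMod (m * n))ˣ),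
    card_units_eq_totient, card_units_eq_totient, Nat.totient_mul hmn] at h
  exact Nat.eq_of_mul_eq_mul_right (Nat.totient_pos.2 (NeZero.pos n)) h

theorem stdAddChar_natCast_mul {m n : ℕ} [NeZero m] [NeZero n] (x : ZMod (m * n)) :
    stdAddChar ((m : ZMod (m * n)) * x) = stdAddChar (castHom (dvd_mul_left n m) (ZMod n) x) := by
  obtain ⟨j, rfl⟩ := intCast_surjective x
  have hm : (m : ℂ) ≠ 0 := Nat.cast_ne_zero.2 (NeZero.ne m)
  rw [map_intCast, ← Int.cast_natCast, ← Int.cast_mul, stdAddChar_coe, stdAddChar_coe]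
  congr 1
  push_cast
  field_simp

theorem stdAddChar_natCast_eq_pow (N : ℕ) [NeZero N] (i : ℕ) :
    stdAddChar (i : ZMod N) = stdAddChar (1 : ZMod N) ^ i := by
  rw [← AddChar.map_nsmul_eq_pow, nsmul_one]

theorem isPrimitiveRoot_stdAddChar_one (N : ℕ) [NeZero N] :
    IsPrimitiveRoot (stdAddChar (1 : ZMod N)) N := by
  rw [← Int.cast_one, stdAddChar_coe, Int.cast_one, mul_one]
  exact Complex.isPrimitiveRoot_exp N (NeZero.ne N)

theorem isPrimitiveRoot_stdAddChar_iff {N : ℕ} [NeZero N] (j : ZMod N) :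
    IsPrimitiveRoot (stdAddChar j) N ↔ IsUnit j := by
  rw [← natCast_zmod_val j, stdAddChar_natCast_eq_pow,
    (isPrimitiveRoot_stdAddChar_one N).pow_iff_coprime (NeZero.pos N), isUnit_iff_coprime]

theorem prod_units_comp_stdAddChar {M : Type*} [CommMonoid M] (N : ℕ) [NeZero N] (f : ℂ → M) :
    ∏ u : (ZMod N)ˣ, f (stdAddChar (u : ZMod N)) = ∏ η ∈ primitiveRoots N ℂ, f η := by
  refine prod_nbij (fun u => stdAddChar (u : ZMod N)) (fun u _ => ?_)
    (fun u _ v _ huv => Units.ext (injective_stdAddChar huv)) (fun η hη => ?_) fun _ _ => rfl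
  · exact (mem_primitiveRoots (NeZero.pos N)).2 ((isPrimitiveRoot_stdAddChar_iff _).2 u.isUnit)
  · have hη' := (mem_primitiveRoots (NeZero.pos N)).1 hη
    obtain ⟨i, -, rfl⟩ :=
      (isPrimitiveRoot_stdAddChar_one N).eq_pow_of_pow_eq_one hη'.pow_eq_one
    rw [← stdAddChar_natCast_eq_pow, isPrimitiveRoot_stdAddChar_iff] at hη'
    exact ⟨hη'.unit, mem_univ _, by simp [stdAddChar_natCast_eq_pow]⟩

end ZMod

theorem det_mul_det_eq_cyclotomic_semiprime_general (q₁ q₂ : ℕ) (hq₁ : Nat.Prime q₁)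
    (hq₂ : Nat.Prime q₂) (hne : q₁ ≠ q₂) (q : ℕ) (hq : q = q₁ * q₂) (n k : ℕ)
    (r : Fin n → ℤ) (s : Fin k → ℤ)
    (hinj : Function.Injective (fun p : (Fin n ⊕ Fin k) × Bool =>
      (if p.2 then ((Sum.elim r s p.1 : ℤ) : ZMod q)
        else -((Sum.elim r s p.1 : ℤ) : ZMod q))))
    (hrange : Set.range (fun p : (Fin n ⊕ Fin k) × Bool =>
      (if p.2 then ((Sum.elim r s p.1 : ℤ) : ZMod q)
        else -((Sum.elim r s p.1 : ℤ) : ZMod q))) = {x : ZMod q | IsUnit x})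
    (t t' : ℕ) (ht : t = t' * q₁)
    (ht' : Nat.Coprime t' q₂) (z : ℂ) :
    ((z • (1 : Matrix (Fin 2 × Fin n) (Fin 2 × Fin n) ℂ)
        - (blockRot q r) ^ t).det)
      * ((z • (1 : Matrix (Fin 2 × Fin k) (Fin 2 × Fin k) ℂ)
        - (blockRot q s) ^ t).det)
      = (∏ η ∈ primitiveRoots q₂ ℂ, (z - η)) ^ (q₁ - 1) := by
  subst hq ht
  have := NeZero.of_pos hq₁.pos
  have := NeZero.of_pos hq₂.pos
  set ψ := ZMod.unitsMap (dvd_mul_left q₂ q₁)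
  set Φ : (Fin n ⊕ Fin k) × Bool → ZMod (q₁ * q₂) := fun p =>
    if p.2 then ((Sum.elim r s p.1 : ℤ) : ZMod (q₁ * q₂))
    else -((Sum.elim r s p.1 : ℤ) : ZMod (q₁ * q₂))
  set f : ZMod (q₁ * q₂) → ℂ := fun x => z - ZMod.stdAddChar (((t' * q₁ : ℕ) : ZMod (q₁ * q₂)) * x)
  set e : ZMod q₂ → ℂ := fun x => z - ZMod.stdAddChar x
  have hfactor (u : (ZMod (q₁ * q₂))ˣ) :
      ((t' * q₁ : ℕ) : ZMod (q₁ * q₂)) * u = q₁ * (t' * u) := by push_cast; ring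
  have hshift : ∏ w : (ZMod q₂)ˣ, e (t' * w) = ∏ w : (ZMod q₂)ˣ, e w := by
    simpa using Equiv.prod_comp (Equiv.mulLeft (ZMod.unitOfCoprime t' ht')) (fun w => e w)
  calc _ = ∏ p, f (Φ p) := by
        simp only [Φ, f, det_smul_one_sub_blockRot_pow, Fintype.prod_prod_type,
          Fintype.prod_sum_type, Fintype.prod_bool, Sum.elim_inl, Sum.elim_inr, if_true,
          Bool.false_eq_true, if_false, prod_mul_distrib]
        ring
    _ = ∏ u : (ZMod (q₁ * q₂))ˣ, f u := Fintype.prod_comp_eq_prod_units hinj hrange f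
    _ = ∏ u : (ZMod (q₁ * q₂))ˣ, e (t' * ψ u) := by
        simp only [f, e, ψ, hfactor, ZMod.stdAddChar_natCast_mul, map_mul, map_natCast,
          ZMod.unitsMap_val, ZMod.castHom_apply]
    _ = _ := by
        rw [ψ.prod_comp_eq_prod_pow_card_ker (ZMod.unitsMap_surjective _) (fun w => e (t' * w)),
          ZMod.card_ker_unitsMap_of_coprime ((Nat.coprime_primes hq₁ hq₂).2 hne),
          Nat.totient_prime hq₁, hshift, ZMod.prod_units_comp_stdAddChar]

theorem det_mul_det_eq_cyclotomic_semiprime (q₁ q₂ : ℕ) (hq₁ : Nat.Prime q₁)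
    (hq₂ : Nat.Prime q₂) (hne : q₁ ≠ q₂) (q : ℕ) (hq : q = q₁ * q₂) (n k : ℕ)
    (r : Fin n → ℤ) (s : Fin k → ℤ)
    (hinj : Function.Injective (fun p : (Fin n ⊕ Fin k) × Bool =>
      (if p.2 then ((Sum.elim r s p.1 : ℤ) : ZMod q)
        else -((Sum.elim r s p.1 : ℤ) : ZMod q))))
    (hrange : Set.range (fun p : (Fin n ⊕ Fin k) × Bool =>
      (if p.2 then ((Sum.elim r s p.1 : ℤ) : ZMod q)
        else -((Sum.elim r s p.1 : ℤ) : ZMod q))) = {x : ZMod q | IsUnit x})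
    (t t' : ℕ) (ht : t = t' * q₁) (ht'1 : 1 ≤ t') (ht'2 : t' ≤ q₂ - 1)
    (ht' : Nat.Coprime t' q₂) (z : ℂ) :
    ((z • (1 : Matrix (Fin 2 × Fin n) (Fin 2 × Fin n) ℂ)
        - (blockRot q r) ^ t).det)
      * ((z • (1 : Matrix (Fin 2 × Fin k) (Fin 2 × Fin k) ℂ)
        - (blockRot q s) ^ t).det)
      = (∏ η ∈ primitiveRoots q₂ ℂ, (z - η)) ^ (q₁ - 1) :=
  det_mul_det_eq_cyclotomic_semiprime_general q₁ q₂ hq₁ hq₂ hne q hq n k r s hinj hrange t t' ht ht'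
    z
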